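/- If (C₂,F₂,h₂) is a strong isomorph of (C₁,F₁,h₁) via permutation matrix P, and T₁* is an optimal coupling for FGW_α between (C₁,F₁,h₁) and (C̄,F̄,h̄), then PT₁* is an optimal coupling for FGW_α between (C₂,F₂,h₂) and (C̄,F̄,h̄). -/
import Mathlib


open Finset Matrix

def ProbSimplex {n : ℕ} (h : Fin n → ℝ) : Prop :=
  (∀ i, 0 ≤ h i) ∧ ∑ i, h i = 1

def IsCoupling {n m : ℕ} (h : Fin n → ℝ) (h' : Fin m → ℝ)
    (T : Matrix (Fin n) (Fin m) ℝ) : Prop :=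
  (∀ i k, 0 ≤ T i k) ∧ (∀ i, ∑ k, T i k = h i) ∧ (∀ k, ∑ i, T i k = h' k)

noncomputable def GWcost {n m : ℕ} (C : Matrix (Fin n) (Fin n) ℝ)
    (C' : Matrix (Fin m) (Fin m) ℝ) (T : Matrix (Fin n) (Fin m) ℝ) : ℝ :=
  ∑ i, ∑ j, ∑ k, ∑ l, (C i j - C' k l)^2 * T i k * T j l

noncomputable def Wcost {n m d : ℕ} (F : Matrix (Fin n) (Fin d) ℝ)
    (F' : Matrix (Fin m) (Fin d) ℝ) (T : Matrix (Fin n) (Fin m) ℝ) : ℝ :=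
  ∑ i, ∑ k, (∑ t, (F i t - F' k t)^2) * T i k

noncomputable def FGWcost {n m d : ℕ} (α : ℝ) (C : Matrix (Fin n) (Fin n) ℝ)
    (F : Matrix (Fin n) (Fin d) ℝ) (C' : Matrix (Fin m) (Fin m) ℝ)
    (F' : Matrix (Fin m) (Fin d) ℝ) (T : Matrix (Fin n) (Fin m) ℝ) : ℝ :=
  α * GWcost C C' T + (1 - α) * Wcost F F' T

noncomputable def FGW {n m d : ℕ} (α : ℝ) (C : Matrix (Fin n) (Fin n) ℝ)
    (F : Matrix (Fin n) (Fin d) ℝ) (h : Fin n → ℝ) (C' : Matrix (Fin m) (Fin m) ℝ)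
    (F' : Matrix (Fin m) (Fin d) ℝ) (h' : Fin m → ℝ) : ℝ :=
  sInf ((fun T => FGWcost α C F C' F' T) '' {T | IsCoupling h h' T})

def IsPermMatrix {n : ℕ} (P : Matrix (Fin n) (Fin n) ℝ) : Prop :=
  ∃ σ : Equiv.Perm (Fin n), ∀ i j, P i j = if i = σ j then 1 else 0

section Aux
open Finset Matrix

variable {n m d : ℕ}

lemma perm_mul_apply (σ : Equiv.Perm (Fin n)) (P : Matrix (Fin n) (Fin n) ℝ)
    (hσ : ∀ i j, P i j = if i = σ j then 1 else 0)
    (T : Matrix (Fin n) (Fin m) ℝ) (i : Fin n) (k : Fin m) :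
    (P * T) i k = T (σ.symm i) k := by
  have : ∀ j : Fin n, (i = σ j) ↔ (j = σ.symm i) := by
    intro j; constructor <;> intro h <;> simp [h]
  simp only [Matrix.mul_apply, hσ]
  rw [Finset.sum_congr rfl (fun j _ => by rw [if_congr (this j) rfl rfl])]
  simp

lemma perm_mulVec_apply (σ : Equiv.Perm (Fin n)) (P : Matrix (Fin n) (Fin n) ℝ)
    (hσ : ∀ i j, P i j = if i = σ j then 1 else 0)
    (h : Fin n → ℝ) (i : Fin n) :
    P.mulVec h i = h (σ.symm i) := by
  have : ∀ j : Fin n, (i = σ j) ↔ (j = σ.symm i) := by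
    intro j; constructor <;> intro h <;> simp [h]
  simp only [Matrix.mulVec, dotProduct, hσ]
  rw [Finset.sum_congr rfl (fun j _ => by rw [if_congr (this j) rfl rfl])]
  simp

lemma perm_conj_apply (σ : Equiv.Perm (Fin n)) (P : Matrix (Fin n) (Fin n) ℝ)
    (hσ : ∀ i j, P i j = if i = σ j then 1 else 0)
    (C : Matrix (Fin n) (Fin n) ℝ) (i j : Fin n) :
    (P * C * Pᵀ) i j = C (σ.symm i) (σ.symm j) := by
  have key : ∀ j' : Fin n, (j = σ j') ↔ (j' = σ.symm j) := by
    intro j'; constructor <;> intro h <;> simp [h]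
  rw [Matrix.mul_apply]
  have : ∀ l, (P * C) i l * Pᵀ l j = if l = σ.symm j then C (σ.symm i) l else 0 := by
    intro l
    rw [perm_mul_apply σ P hσ, Matrix.transpose_apply, hσ]
    rw [if_congr (key l) rfl rfl]
    split <;> simp
  rw [Finset.sum_congr rfl (fun l _ => this l)]
  simp

end Aux

lemma cost_equiv {n m d : ℕ} (α : ℝ) (σ : Equiv.Perm (Fin n))
    (P : Matrix (Fin n) (Fin n) ℝ)
    (hσ : ∀ i j, P i j = if i = σ j then 1 else 0)
    (C₁ : Matrix (Fin n) (Fin n) ℝ) (C' : Matrix (Fin m) (Fin m) ℝ)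
    (F₁ : Matrix (Fin n) (Fin d) ℝ) (F' : Matrix (Fin m) (Fin d) ℝ)
    (T : Matrix (Fin n) (Fin m) ℝ) :
    FGWcost α (P * C₁ * Pᵀ) (P * F₁) C' F' (P * T) = FGWcost α C₁ F₁ C' F' T := by
  have hGW : GWcost (P * C₁ * Pᵀ) C' (P * T) = GWcost C₁ C' T := by
    unfold GWcost
    simp only [perm_conj_apply σ P hσ, perm_mul_apply σ P hσ]
    rw [← Equiv.sum_comp σ (fun i => ∑ j, ∑ k, ∑ l,
      (C₁ (σ.symm i) (σ.symm j) - C' k l)^2 * T (σ.symm i) k * T (σ.symm j) l)]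
    simp only [Equiv.symm_apply_apply]
    refine Finset.sum_congr rfl (fun i _ => ?_)
    rw [← Equiv.sum_comp σ (fun j => ∑ k, ∑ l,
      (C₁ i (σ.symm j) - C' k l)^2 * T i k * T (σ.symm j) l)]
    simp only [Equiv.symm_apply_apply]
  have hW : Wcost (P * F₁) F' (P * T) = Wcost F₁ F' T := by
    unfold Wcost
    simp only [perm_mul_apply σ P hσ]
    rw [← Equiv.sum_comp σ (fun i => ∑ k,
      (∑ t, (F₁ (σ.symm i) t - F' k t)^2) * T (σ.symm i) k)]
    simp only [Equiv.symm_apply_apply]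
  unfold FGWcost
  rw [hGW, hW]

theorem stmt12 {n m d : ℕ} (α : ℝ) (hα : α ∈ Set.Icc (0:ℝ) 1)
    (P : Matrix (Fin n) (Fin n) ℝ) (hP : IsPermMatrix P)
    (C₁ : Matrix (Fin n) (Fin n) ℝ) (C' : Matrix (Fin m) (Fin m) ℝ)
    (hC₁ : C₁.IsSymm) (hC' : C'.IsSymm)
    (F₁ : Matrix (Fin n) (Fin d) ℝ) (F' : Matrix (Fin m) (Fin d) ℝ)
    (h₁ : Fin n → ℝ) (h' : Fin m → ℝ) (hh₁ : ProbSimplex h₁) (hh' : ProbSimplex h')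
    (T₁ : Matrix (Fin n) (Fin m) ℝ) (hT₁ : IsCoupling h₁ h' T₁)
    (hopt : ∀ T : Matrix (Fin n) (Fin m) ℝ, IsCoupling h₁ h' T →
      FGWcost α C₁ F₁ C' F' T₁ ≤ FGWcost α C₁ F₁ C' F' T) :
    IsCoupling (P.mulVec h₁) h' (P * T₁) ∧
      ∀ T : Matrix (Fin n) (Fin m) ℝ, IsCoupling (P.mulVec h₁) h' T →
        FGWcost α (P * C₁ * Pᵀ) (P * F₁) C' F' (P * T₁) ≤
          FGWcost α (P * C₁ * Pᵀ) (P * F₁) C' F' T := by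
  obtain ⟨σ, hσ⟩ := hP
  obtain ⟨hTnn, hTrow, hTcol⟩ := hT₁
  have hcoup : IsCoupling (P.mulVec h₁) h' (P * T₁) := by
    refine ⟨fun i k => ?_, fun i => ?_, fun k => ?_⟩
    · rw [perm_mul_apply σ P hσ]; exact hTnn _ _
    · simp only [perm_mul_apply σ P hσ, perm_mulVec_apply σ P hσ]
      exact hTrow _
    · simp only [perm_mul_apply σ P hσ]
      rw [Equiv.sum_comp σ.symm (fun i => T₁ i k)]
      exact hTcol _
  refine ⟨hcoup, fun T hT => ?_⟩
  set S : Matrix (Fin n) (Fin m) ℝ := fun i k => T (σ i) k with hS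
  have hTS : T = P * S := by
    ext i k
    rw [perm_mul_apply σ P hσ, hS]
    simp
  have hScoup : IsCoupling h₁ h' S := by
    obtain ⟨hnn, hrow, hcol⟩ := hT
    refine ⟨fun i k => hnn _ _, fun i => ?_, fun k => ?_⟩
    · have := hrow (σ i)
      rw [perm_mulVec_apply σ P hσ, Equiv.symm_apply_apply] at this
      simpa [hS] using this
    · have := hcol k
      rw [← Equiv.sum_comp σ (fun i => T i k)] at this
      simpa [hS] using this
  calc FGWcost α (P * C₁ * Pᵀ) (P * F₁) C' F' (P * T₁)
      = FGWcost α C₁ F₁ C' F' T₁ := cost_equiv α σ P hσ C₁ C' F₁ F' T₁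
    _ ≤ FGWcost α C₁ F₁ C' F' S := hopt S hScoup
    _ = FGWcost α (P * C₁ * Pᵀ) (P * F₁) C' F' (P * S) :=
        (cost_equiv α σ P hσ C₁ C' F₁ F' S).symm
    _ = FGWcost α (P * C₁ * Pᵀ) (P * F₁) C' F' T := by rw [← hTS]
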